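/- For a pmf f on Z_+ with mean λ ∈ (0,∞), D(f) ≤ λ · D(S(f) | f). -/

import Mathlib

open scoped BigOperators ENNReal Classical
open Filter

/-- `f` is a probability mass function on `ℕ`. -/
def IsPmf (f : ℕ → ℝ) : Prop := (∀ i, 0 ≤ f i) ∧ HasSum f 1

/-- The mean of a pmf on `ℕ`. -/
noncomputable def pmfMean (f : ℕ → ℝ) : ℝ := ∑' i : ℕ, (i : ℝ) * f i

/-- The Poisson pmf with parameter `lam`. -/
noncomputable def po (lam : ℝ) (i : ℕ) : ℝ := lam ^ i * Real.exp (-lam) / (Nat.factorial i)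

/-- The `α`-thinning of a pmf `f`. -/
noncomputable def thin (α : ℝ) (f : ℕ → ℝ) (i : ℕ) : ℝ :=
  ∑' j : ℕ, f j * (Nat.choose j i : ℝ) * α ^ i * (1 - α) ^ (j - i)

/-- Convolution of two pmfs on `ℕ`. -/
def conv (f g : ℕ → ℝ) (i : ℕ) : ℝ := ∑ j ∈ Finset.range (i + 1), f j * g (i - j)

/-- `n`-fold convolution power of a pmf; `convPow f 1 = f`. -/
def convPow (f : ℕ → ℝ) : ℕ → ℕ → ℝ
  | 0 => fun i => if i = 0 then 1 else 0
  | n + 1 => conv (convPow f n) f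

/-- Shannon entropy of a pmf on `ℕ`. -/
noncomputable def ent (f : ℕ → ℝ) : ℝ := -∑' i : ℕ, f i * Real.log (f i)

/-- Relative entropy `D(f | g)`, valued in `ℝ≥0∞`; it is `∞` if the support of `f`
is not contained in that of `g` or if the defining series does not converge. -/
noncomputable def KL (f g : ℕ → ℝ) : ℝ≥0∞ :=
  if (∀ i, g i = 0 → f i = 0) ∧ Summable (fun i : ℕ => f i * Real.log (f i / g i)) then
    ENNReal.ofReal (∑' i : ℕ, f i * Real.log (f i / g i))
  else ⊤

/-- `D(f) = D(f | po(λ))` where `λ` is the mean of `f`. -/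
noncomputable def KLpo (f : ℕ → ℝ) : ℝ≥0∞ := KL f (po (pmfMean f))

/-- The size-biased pmf `S(f)`. -/
noncomputable def sizeBias (f : ℕ → ℝ) (i : ℕ) : ℝ := (i + 1 : ℝ) * f (i + 1) / pmfMean f

/-!
With `π = po λ` and `g = f / π`, the identity `π x * g (x + 1) = S(f) x` (from `succ_mul_po_succ`)
and `∑ f = ∑ π = ∑ S(f) = 1` turn the claim into the modified logarithmic Sobolev inequality of the
Poisson law, `∑ π x * klTerm (g x) 1 ≤ λ * ∑ π x * klTerm (g (x + 1)) (g x)`.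

For `g` with values in `[α, β]`, `0 < α`, interpolate along the Poisson semigroup
`birthSemigroup τ g x = E g (x + Po(τ))`: with `μ = ∑ π g`, `entropyInterpolation λ μ g` vanishes at
`0` and is the left side at `λ`. As `klTerm` is the Bregman divergence of `u ↦ u log u`, its
derivative at `t` is the energy `∑ po t x * klTerm (P g (x + 1)) (P g x)` of
`P = birthSemigroup (λ - t)`; as `klTerm` is a supremum of linear functions, Jensen and the
semigroup law bound it by the energy of `g`, and the mean value theorem concludes. A general `g` is
approximated by `min g (N + 1) + 1 / (N + 1)`, which can only lower the energy, while the entropy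
passes to the limit on partial sums.
-/

open Real Set Topology
open Finset.HasAntidiagonal (antidiagonal)

-- Since `log 0 = 0`, `klTerm a 0 = -a` is junk for `a ≠ 0`: hence the hypotheses `b = 0 → a = 0`.
noncomputable def klTerm (a b : ℝ) : ℝ := a * log (a / b) - a + b

lemma klTerm_self (a : ℝ) : klTerm a a = 0 := by
  by_cases ha : a = 0 <;> simp [klTerm, ha]

lemma klTerm_eq {b : ℝ} (a : ℝ) (hb : b ≠ 0) : klTerm a b = a * log a - a * log b - a + b := by
  rcases eq_or_ne a 0 with rfl | ha
  · simp [klTerm]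
  · rw [klTerm, log_div ha hb]; ring

lemma mul_klTerm {c : ℝ} (hc : 0 < c) (a b : ℝ) : c * klTerm a b = klTerm (c * a) (c * b) := by
  rw [klTerm, klTerm, mul_div_mul_left _ _ hc.ne']; ring

-- Equality holds at `t = a / b`: `klTerm` is a supremum of linear functions of `(a, b)`.
lemma mul_log_add_le_klTerm {a b t : ℝ} (ha : 0 ≤ a) (hb : 0 < b) (ht : 0 < t) :
    a * log t + (1 - t) * b ≤ klTerm a b := by
  rcases ha.eq_or_lt with rfl | ha
  · simp only [klTerm]; nlinarith
  have h := log_le_sub_one_of_pos (show 0 < b * t / a by positivity)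
  rw [log_div (by positivity) ha.ne', log_mul hb.ne' ht.ne'] at h
  have hbt : a * (b * t / a - 1) = b * t - a := by field_simp
  rw [klTerm_eq a hb.ne']
  nlinarith [mul_le_mul_of_nonneg_left h ha.le]

lemma klTerm_nonneg {a b : ℝ} (ha : 0 ≤ a) (hb : 0 < b) : 0 ≤ klTerm a b := by
  simpa using mul_log_add_le_klTerm ha hb one_pos

lemma klTerm_add_le {a b ε : ℝ} (ha : 0 ≤ a) (hb : 0 ≤ b) (hab : b = 0 → a = 0) (hε : 0 < ε) :
    klTerm (a + ε) (b + ε) ≤ klTerm a b := by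
  rcases hb.eq_or_lt with rfl | hb
  · rw [hab rfl, klTerm_self, klTerm_self]
  set t := (a + ε) / (b + ε)
  have ht : 0 < t := by positivity
  have htb : t * (b + ε) = a + ε := div_mul_cancel₀ _ (by positivity)
  have hsplit : klTerm (a + ε) (b + ε) = (a * log t + (1 - t) * b) + ε * (log t + 1 - t) := by
    unfold klTerm; linear_combination htb
  have := log_le_sub_one_of_pos ht
  nlinarith [mul_log_add_le_klTerm ha hb ht]

lemma klTerm_min_le {a b c : ℝ} (ha : 0 ≤ a) (hb : 0 ≤ b) (hab : b = 0 → a = 0) (hc : 0 < c) :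
    klTerm (min a c) (min b c) ≤ klTerm a b := by
  rcases le_total a c with hac | hca <;> rcases le_total b c with hbc | hcb
  · rw [min_eq_left hac, min_eq_left hbc]
  · rw [min_eq_left hac, min_eq_right hcb]
    rcases ha.eq_or_lt with rfl | ha
    · simpa [klTerm]
    have key : (1 - a / c) * b - (c - a) = (c - a) * (b - c) / c := by field_simp
    have : 0 ≤ (c - a) * (b - c) / c := by
      apply div_nonneg (mul_nonneg _ _) hc.le <;> linarith
    have := mul_log_add_le_klTerm ha.le (hc.trans_le hcb) (div_pos ha hc)
    unfold klTerm at *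
    linarith
  · rw [min_eq_right hca, min_eq_left hbc]
    have hb : 0 < b := hb.lt_of_ne fun h => by linarith [hab h.symm]
    have hlog : 0 ≤ log (c / b) := log_nonneg ((one_le_div hb).2 hbc)
    have key : (1 - c / b) * b = b - c := by field_simp
    have := mul_log_add_le_klTerm ha hb (div_pos hc hb)
    unfold klTerm at *
    nlinarith [mul_le_mul_of_nonneg_right hca hlog]
  · rw [min_eq_right hca, min_eq_right hcb, klTerm_self]
    exact klTerm_nonneg ha (hc.trans_le hcb)

lemma klTerm_min_add_le {a b c ε : ℝ} (ha : 0 ≤ a) (hb : 0 ≤ b) (hab : b = 0 → a = 0)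
    (hc : 0 < c) (hε : 0 < ε) : klTerm (min a c + ε) (min b c + ε) ≤ klTerm a b := by
  refine (klTerm_add_le (le_min ha hc.le) (le_min hb hc.le) (fun h0 => ?_) hε).trans
    (klTerm_min_le ha hb hab hc)
  have hb0 : b = 0 := by
    by_contra hne
    linarith [lt_min (hb.lt_of_ne (Ne.symm hne)) hc]
  rw [hab hb0, min_eq_left hc.le]

lemma klTerm_sub_klTerm {b m : ℝ} (a : ℝ) (hb : 0 < b) (hm : 0 < m) :
    klTerm a m - klTerm b m - log (b / m) * (a - b) = klTerm a b := by
  rw [klTerm_eq a hm.ne', klTerm_eq b hm.ne', klTerm_eq a hb.ne', log_div hb.ne' hm.ne']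
  ring

lemma hasDerivAt_klTerm_left {a b : ℝ} (ha : 0 < a) (hb : b ≠ 0) :
    HasDerivAt (fun u => klTerm u b) (log (a / b)) a := by
  have h : HasDerivAt (fun u => u * log u - u * log b - u + b) (log a + 1 - 1 * log b - 1) a :=
    (((hasDerivAt_mul_log ha.ne').sub ((hasDerivAt_id' a).mul_const (log b))).sub
      (hasDerivAt_id' a)).add_const b
  have hf : (fun u => klTerm u b) = fun u => u * log u - u * log b - u + b :=
    funext fun u => klTerm_eq u hb
  rw [hf, log_div ha.ne' hb]
  convert h using 1
  ring

lemma continuous_klTerm_left {b : ℝ} (hb : b ≠ 0) : Continuous (fun a => klTerm a b) := by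
  simp only [klTerm_eq _ hb]
  fun_prop

lemma Filter.Tendsto.klTerm {α : Type*} {l : Filter α} {u v : α → ℝ} {a b : ℝ}
    (hu : Tendsto u l (𝓝 a)) (hv : Tendsto v l (𝓝 b)) (hb : b ≠ 0) :
    Tendsto (fun n => klTerm (u n) (v n)) l (𝓝 (klTerm a b)) := by
  rw [klTerm_eq a hb]
  refine Tendsto.congr' ?_ (((((continuous_mul_log.tendsto a).comp hu).sub
    (hu.mul (hv.log hb))).sub hu).add hv)
  filter_upwards [hv.eventually_ne hb] with n hn
  simp [klTerm_eq _ hn]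

lemma abs_le_of_mem_Icc {a α β : ℝ} (ha : a ∈ Icc α β) (hα : 0 ≤ α) : |a| ≤ β :=
  abs_le.2 ⟨by linarith [ha.1, ha.2], ha.2⟩

lemma abs_log_div_le {a b α β : ℝ} (ha : a ∈ Icc α β) (hb : b ∈ Icc α β) (hα : 0 < α) :
    |log (a / b)| ≤ log (β / α) := by
  have ha0 : 0 < a := hα.trans_le ha.1
  have hb0 : 0 < b := hα.trans_le hb.1
  have hβ : 0 < β := ha0.trans_le ha.2
  rw [abs_le, ← log_inv, inv_div]
  constructor
  · exact log_le_log (by positivity) (div_le_div₀ ha0.le ha.1 hb0 hb.2)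
  · exact log_le_log (by positivity) (div_le_div₀ hβ.le ha.2 hα hb.1)

lemma abs_klTerm_le {a b α β : ℝ} (ha : a ∈ Icc α β) (hb : b ∈ Icc α β) (hα : 0 < α) :
    |klTerm a b| ≤ β * log (β / α) + (β - α) := by
  have hl := abs_log_div_le ha hb hα
  have hab : |b - a| ≤ β - α := abs_sub_le_of_le_of_le hb.1 hb.2 ha.1 ha.2
  calc |klTerm a b| = |a * log (a / b) + (b - a)| := by rw [klTerm]; ring_nf
    _ ≤ |a * log (a / b)| + |b - a| := abs_add_le _ _
    _ = a * |log (a / b)| + |b - a| := by rw [abs_mul, abs_of_pos (hα.trans_le ha.1)]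
    _ ≤ β * log (β / α) + (β - α) :=
        add_le_add (mul_le_mul ha.2 hl (abs_nonneg _) (hα.trans_le (ha.1.trans ha.2)).le) hab

lemma po_nonneg {t : ℝ} (ht : 0 ≤ t) (x : ℕ) : 0 ≤ po t x := by unfold po; positivity

lemma po_pos {t : ℝ} (ht : 0 < t) (x : ℕ) : 0 < po t x := by unfold po; positivity

lemma po_le_pow_div_factorial {t L : ℝ} (ht : 0 ≤ t) (htL : t ≤ L) (x : ℕ) :
    po t x ≤ L ^ x / x.factorial := by
  have : exp (-t) ≤ 1 := exp_le_one_iff.2 (by linarith)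
  calc po t x ≤ t ^ x / x.factorial := by
        unfold po; gcongr; exact mul_le_of_le_one_right (by positivity) this
    _ ≤ L ^ x / x.factorial := by gcongr

lemma hasSum_po (t : ℝ) : HasSum (po t) 1 := by
  have h := (NormedSpace.expSeries_div_hasSum_exp t).mul_right (exp (-t))
  rw [← exp_eq_exp_ℝ, ← exp_add, add_neg_cancel, exp_zero] at h
  have hpo : po t = fun n => t ^ n / n.factorial * exp (-t) := funext fun n => by unfold po; ring
  rw [hpo]
  exact h

lemma tsum_po_zero_mul (G : ℕ → ℝ) : ∑' x, po 0 x * G x = G 0 := by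
  rw [tsum_eq_single 0 fun x hx => by simp [po, hx]]
  simp [po]

lemma succ_mul_po_succ (t : ℝ) (x : ℕ) : (x + 1) * po t (x + 1) = t * po t x := by
  unfold po
  rw [Nat.factorial_succ, pow_succ]
  push_cast
  field_simp

lemma continuous_po (x : ℕ) : Continuous fun t => po t x := by
  unfold po; fun_prop

-- The `if` stands for `po t (-1) = 0`; truncated subtraction would make `po t (0 - 1)` junk.
lemma hasDerivAt_po (x : ℕ) (t : ℝ) :
    HasDerivAt (fun s => po s x) ((if x = 0 then 0 else po t (x - 1)) - po t x) t := by
  have h : HasDerivAt (fun s => s ^ x * exp (-s) / (x.factorial : ℝ))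
      ((x * t ^ (x - 1) * exp (-t) + t ^ x * (exp (-t) * -1)) / x.factorial) t :=
    ((hasDerivAt_pow x t).mul (hasDerivAt_neg t).exp).div_const _
  refine h.congr_deriv ?_
  rcases x with _ | n
  · simp [po]
  · simp only [po, Nat.factorial_succ, if_neg n.succ_ne_zero, Nat.add_sub_cancel]
    push_cast
    field_simp
    ring

lemma summable_po_mul {t C : ℝ} (ht : 0 ≤ t) {G : ℕ → ℝ} (hG : ∀ x, |G x| ≤ C) :
    Summable fun x => po t x * G x :=
  Summable.of_norm_bounded ((hasSum_po t).summable.mul_right C) fun x => by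
    rw [Real.norm_eq_abs, abs_mul, abs_of_nonneg (po_nonneg ht x)]
    exact mul_le_mul_of_nonneg_left (hG x) (po_nonneg ht x)

lemma tsum_po_mul_mem_Icc {t α β : ℝ} (ht : 0 ≤ t) {G : ℕ → ℝ} (hG : ∀ x, G x ∈ Icc α β) :
    ∑' x, po t x * G x ∈ Icc α β := by
  have hs := (summable_po_mul ht fun x => abs_le_max_abs_abs (hG x).1 (hG x).2).hasSum
  have hconst (c : ℝ) : HasSum (fun x => po t x * c) c := by
    simpa using (hasSum_po t).mul_right c
  exact ⟨hasSum_le (fun x => mul_le_mul_of_nonneg_left (hG x).1 (po_nonneg ht x)) (hconst α) hs,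
    hasSum_le (fun x => mul_le_mul_of_nonneg_left (hG x).2 (po_nonneg ht x)) hs (hconst β)⟩

lemma continuousOn_tsum_po_mul {L C : ℝ} {F : ℕ → ℝ → ℝ} (hF : ∀ x, ContinuousOn (F x) (Icc 0 L))
    (hC : ∀ x, ∀ t ∈ Icc 0 L, |F x t| ≤ C) :
    ContinuousOn (fun t => ∑' x, po t x * F x t) (Icc 0 L) := by
  refine continuousOn_tsum (fun x => (continuous_po x).continuousOn.mul (hF x))
    ((Real.summable_pow_div_factorial L).mul_right C) fun x t ht => ?_
  rw [Real.norm_eq_abs, abs_mul, abs_of_nonneg (po_nonneg ht.1 x)]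
  exact mul_le_mul (po_le_pow_div_factorial ht.1 ht.2 x) (hC x t ht) (abs_nonneg _)
    ((po_nonneg ht.1 x).trans (po_le_pow_div_factorial ht.1 ht.2 x))

lemma hasSum_shift_po_mul_iff {r A : ℝ} {G : ℕ → ℝ} :
    HasSum (fun x => (if x = 0 then 0 else po r (x - 1)) * G x) A ↔
      HasSum (fun x => po r x * G (x + 1)) A := by
  rw [← hasSum_nat_add_iff' 1]
  simp

lemma tsum_shift_po_mul_add {r C D : ℝ} (hr : 0 ≤ r) {G G' : ℕ → ℝ} (hG : ∀ x, |G x| ≤ C)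
    (hG' : ∀ x, |G' x| ≤ D) :
    ∑' x, ((if x = 0 then 0 else po r (x - 1)) * G x + po r x * (G' x - G x)) =
      ∑' x, po r x * (G (x + 1) - G x + G' x) := by
  have hsucc := summable_po_mul hr fun x => hG (x + 1)
  have hdiff := summable_po_mul (G := fun x => G' x - G x) hr fun x =>
    (abs_sub _ _).trans (add_le_add (hG' x) (hG x))
  rw [((hasSum_shift_po_mul_iff.2 hsucc.hasSum).add hdiff.hasSum).tsum_eq,
    ← hsucc.tsum_add hdiff]
  exact tsum_congr fun x => by ring

lemma hasDerivAt_tsum_po_mul {L C D r : ℝ} {F F' : ℕ → ℝ → ℝ}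
    (hF : ∀ x, ∀ t ∈ Ioo 0 L, HasDerivAt (F x) (F' x t) t)
    (hC : ∀ x, ∀ t ∈ Ioo 0 L, |F x t| ≤ C) (hD : ∀ x, ∀ t ∈ Ioo 0 L, |F' x t| ≤ D)
    (hr : r ∈ Ioo 0 L) :
    HasDerivAt (fun t => ∑' x, po t x * F x t)
      (∑' x, po r x * (F (x + 1) r - F x r + F' x r)) r := by
  set w : ℕ → ℝ := fun x => L ^ x / x.factorial
  set shift : ℝ → ℕ → ℝ := fun t x => if x = 0 then 0 else po t (x - 1)
  have hw : Summable w := Real.summable_pow_div_factorial L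
  have hw' : Summable fun x => if x = 0 then 0 else w (x - 1) := by
    rw [← summable_nat_add_iff 1]; simpa using hw
  have hpo : ∀ x, ∀ t ∈ Ioo 0 L, |po t x| ≤ w x := fun x t ht => by
    rw [abs_of_nonneg (po_nonneg ht.1.le x)]; exact po_le_pow_div_factorial ht.1.le ht.2.le x
  have hshift : ∀ x, ∀ t ∈ Ioo 0 L, |shift t x| ≤ if x = 0 then 0 else w (x - 1) := by
    rintro (_ | x) t ht
    · simp [shift]
    · simpa [shift] using hpo x t ht
  have hFD : ∀ x, ∀ t ∈ Ioo 0 L, |F' x t - F x t| ≤ D + C := fun x t ht =>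
    (abs_sub _ _).trans (add_le_add (hD x t ht) (hC x t ht))
  refine (hasDerivAt_tsum_of_isPreconnected (g := fun x t => po t x * F x t)
    (g' := fun x t => shift t x * F x t + po t x * (F' x t - F x t))
    (u := fun x => (if x = 0 then 0 else w (x - 1)) * C + w x * (D + C))
    ((hw'.mul_right C).add (hw.mul_right _)) isOpen_Ioo isPreconnected_Ioo
    (fun x t ht => ?_) (fun x t ht => ?_) hr
    (summable_po_mul (G := fun x => F x r) hr.1.le fun x => hC x r hr) hr).congr_deriv
    (tsum_shift_po_mul_add hr.1.le (fun x => hC x r hr) fun x => hD x r hr)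
  · exact ((hasDerivAt_po x t).mul (hF x t ht)).congr_deriv (by ring)
  · rw [Real.norm_eq_abs]
    refine (abs_add_le _ _).trans (add_le_add ?_ ?_) <;> rw [abs_mul]
    · exact mul_le_mul (hshift x t ht) (hC x t ht) (abs_nonneg _)
        ((abs_nonneg _).trans (hshift x t ht))
    · exact mul_le_mul (hpo x t ht) (hFD x t ht) (abs_nonneg _)
        ((abs_nonneg _).trans (hpo x t ht))

lemma sum_antidiagonal_po_mul_po (r s : ℝ) (n : ℕ) :
    ∑ kl ∈ antidiagonal n, po r kl.1 * po s kl.2 = po (r + s) n := by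
  rw [po, (Commute.all r s).add_pow', Finset.sum_mul, Finset.sum_div]
  refine Finset.sum_congr rfl fun kl hkl => ?_
  rw [Finset.HasAntidiagonal.mem_antidiagonal] at hkl
  subst hkl
  rw [nsmul_eq_mul, Nat.cast_add_choose, neg_add, exp_add, po, po]
  field_simp

lemma tsum_eq_tsum_sum_antidiagonal {P : ℕ × ℕ → ℝ} (hP : Summable P) :
    ∑' p, P p = ∑' n, ∑ kl ∈ antidiagonal n, P kl := by
  rw [← Finset.HasAntidiagonal.sigmaAntidiagonalEquivProd.tsum_eq P]
  refine (((Equiv.summable_iff _).2 hP).tsum_sigma' fun n => (hasSum_fintype _).summable).trans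
    (tsum_congr fun n => ?_)
  rw [tsum_fintype]
  exact Finset.sum_coe_sort _ _

noncomputable def birthSemigroup (τ : ℝ) (h : ℕ → ℝ) (x : ℕ) : ℝ := ∑' m, po τ m * h (x + m)

section birthSemigroup

variable {τ : ℝ} {h : ℕ → ℝ}

lemma birthSemigroup_zero (x : ℕ) : birthSemigroup 0 h x = h x := by
  rw [birthSemigroup, tsum_po_zero_mul (fun m => h (x + m)), add_zero]

lemma birthSemigroup_mem_Icc {α β : ℝ} (hτ : 0 ≤ τ) (hh : ∀ y, h y ∈ Icc α β) (x : ℕ) :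
    birthSemigroup τ h x ∈ Icc α β :=
  tsum_po_mul_mem_Icc hτ fun m => hh (x + m)

lemma continuousOn_birthSemigroup {C : ℝ} (hh : ∀ y, |h y| ≤ C) (L : ℝ) (x : ℕ) :
    ContinuousOn (fun t => birthSemigroup t h x) (Icc 0 L) :=
  continuousOn_tsum_po_mul (F := fun m _ => h (x + m)) (fun _ => continuousOn_const)
    fun _ _ _ => hh _

lemma hasDerivAt_birthSemigroup {C : ℝ} (hτ : 0 < τ) (hh : ∀ y, |h y| ≤ C) (x : ℕ) :
    HasDerivAt (fun t => birthSemigroup t h x)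
      (birthSemigroup τ h (x + 1) - birthSemigroup τ h x) τ := by
  refine (hasDerivAt_tsum_po_mul (L := τ + 1) (C := C) (D := 0) (F := fun m _ => h (x + m))
    (F' := fun _ _ => 0) (fun _ t _ => hasDerivAt_const t _) (fun _ _ _ => hh _)
    (fun _ _ _ => by simp) ⟨hτ, by linarith⟩).congr_deriv ?_
  rw [birthSemigroup, birthSemigroup, ← (summable_po_mul hτ.le fun m => hh (x + 1 + m)).tsum_sub
    (summable_po_mul hτ.le fun m => hh (x + m))]
  exact tsum_congr fun m => by rw [show x + 1 + m = x + (m + 1) by ring]; ring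

lemma birthSemigroup_birthSemigroup {r s C : ℝ} (hr : 0 ≤ r) (hs : 0 ≤ s) {F : ℕ → ℝ}
    (hF : ∀ y, |F y| ≤ C) (x : ℕ) :
    birthSemigroup r (birthSemigroup s F) x = birthSemigroup (r + s) F x := by
  set P : ℕ × ℕ → ℝ := fun p => po r p.1 * (po s p.2 * F (x + p.1 + p.2))
  have hP : Summable P := by
    refine Summable.of_norm_bounded (((hasSum_po r).summable.mul_of_nonneg (hasSum_po s).summable
      (po_nonneg hr) (po_nonneg hs)).mul_right C) fun p => ?_
    rw [Real.norm_eq_abs, abs_mul, abs_mul, abs_of_nonneg (po_nonneg hr _),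
      abs_of_nonneg (po_nonneg hs _), ← mul_assoc]
    exact mul_le_mul_of_nonneg_left (hF _) (mul_nonneg (po_nonneg hr _) (po_nonneg hs _))
  calc birthSemigroup r (birthSemigroup s F) x = ∑' p, P p := by
        rw [hP.tsum_prod]
        refine tsum_congr fun a => ?_
        rw [birthSemigroup, ← tsum_mul_left]
    _ = ∑' n, ∑ kl ∈ antidiagonal n, P kl := tsum_eq_tsum_sum_antidiagonal hP
    _ = birthSemigroup (r + s) F x := tsum_congr fun n => by
        rw [← sum_antidiagonal_po_mul_po, Finset.sum_mul]
        refine Finset.sum_congr rfl fun kl hkl => ?_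
        rw [Finset.HasAntidiagonal.mem_antidiagonal] at hkl
        simp only [P, add_assoc, hkl]
        ring

lemma klTerm_birthSemigroup_le {α β : ℝ} (hτ : 0 ≤ τ) (hα : 0 < α) (hh : ∀ y, h y ∈ Icc α β)
    (x : ℕ) :
    klTerm (birthSemigroup τ h (x + 1)) (birthSemigroup τ h x) ≤
      birthSemigroup τ (fun y => klTerm (h (y + 1)) (h y)) x := by
  set a := birthSemigroup τ h (x + 1)
  set b := birthSemigroup τ h x
  have ha : 0 < a := hα.trans_le (birthSemigroup_mem_Icc hτ hh _).1
  have hb : 0 < b := hα.trans_le (birthSemigroup_mem_Icc hτ hh _).1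
  have hc : 0 < a / b := div_pos ha hb
  have hβ : ∀ y, |h y| ≤ β := fun y => abs_le_of_mem_Icc (hh y) hα.le
  have hlin : HasSum (fun m => po τ m * (h (x + m + 1) * log (a / b) + (1 - a / b) * h (x + m)))
      (a * log (a / b) + (1 - a / b) * b) := by
    refine (((summable_po_mul hτ fun m => hβ (x + 1 + m)).hasSum.mul_right (log (a / b))).add
      ((summable_po_mul hτ fun m => hβ (x + m)).hasSum.mul_left (1 - a / b))).congr_fun
      fun m => ?_
    rw [Nat.add_right_comm x 1 m]; ring
  have hkl := (summable_po_mul hτ fun m => abs_klTerm_le (hh (x + m + 1)) (hh (x + m)) hα).hasSum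
  calc klTerm a b = a * log (a / b) + (1 - a / b) * b := by
        rw [klTerm]; field_simp; ring
    _ ≤ _ := hasSum_le (fun m => mul_le_mul_of_nonneg_left
        (mul_log_add_le_klTerm (hα.trans_le (hh _).1).le (hα.trans_le (hh _).1) hc)
        (po_nonneg hτ m)) hlin hkl

end birthSemigroup

noncomputable def entropyInterpolation (lam μ : ℝ) (h : ℕ → ℝ) (t : ℝ) : ℝ :=
  ∑' x, po t x * klTerm (birthSemigroup (lam - t) h x) μ

section entropyInterpolation

variable {lam μ α β : ℝ} {h : ℕ → ℝ}

lemma entropyInterpolation_zero :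
    entropyInterpolation lam μ h 0 = klTerm (∑' y, po lam y * h y) μ := by
  simp [entropyInterpolation, tsum_po_zero_mul, birthSemigroup]

lemma entropyInterpolation_self :
    entropyInterpolation lam μ h lam = ∑' x, po lam x * klTerm (h x) μ := by
  simp only [entropyInterpolation, sub_self, birthSemigroup_zero]

lemma continuousOn_entropyInterpolation (hα : 0 < α) (hh : ∀ x, h x ∈ Icc α β)
    (hμ : μ ∈ Icc α β) : ContinuousOn (entropyInterpolation lam μ h) (Icc 0 lam) := by
  refine continuousOn_tsum_po_mul (fun x => ?_) fun x t ht =>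
    abs_klTerm_le (birthSemigroup_mem_Icc (sub_nonneg.2 ht.2) hh x) hμ hα
  exact (continuous_klTerm_left (hα.trans_le hμ.1).ne').comp_continuousOn
    ((continuousOn_birthSemigroup (fun y => abs_le_of_mem_Icc (hh y) hα.le) lam x).comp
      (continuous_const.sub continuous_id).continuousOn
      fun t ht => ⟨sub_nonneg.2 ht.2, by linarith [ht.1]⟩)

lemma hasDerivAt_entropyInterpolation (hα : 0 < α) (hh : ∀ x, h x ∈ Icc α β)
    (hμ : μ ∈ Icc α β) {t : ℝ} (ht : t ∈ Ioo 0 lam) :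
    HasDerivAt (entropyInterpolation lam μ h) (∑' x, po t x *
      klTerm (birthSemigroup (lam - t) h (x + 1)) (birthSemigroup (lam - t) h x)) t := by
  set u : ℝ → ℕ → ℝ := fun s x => birthSemigroup (lam - s) h x
  have hu : ∀ s ∈ Ioo 0 lam, ∀ x, u s x ∈ Icc α β := fun s hs =>
    birthSemigroup_mem_Icc (sub_nonneg.2 hs.2.le) hh
  have hμ0 : 0 < μ := hα.trans_le hμ.1
  refine (hasDerivAt_tsum_po_mul (F := fun x s => klTerm (u s x) μ)
    (F' := fun x s => log (u s x / μ) * ((u s (x + 1) - u s x) * -1))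
    (C := β * log (β / α) + (β - α)) (D := log (β / α) * (β - α)) (fun x s hs => ?_)
    (fun x s hs => abs_klTerm_le (hu s hs x) hμ hα) (fun x s hs => ?_) ht).congr_deriv ?_
  · have hus : HasDerivAt (fun s => u s x) ((u s (x + 1) - u s x) * -1) s :=
      (hasDerivAt_birthSemigroup (sub_pos.2 hs.2) (fun y => abs_le_of_mem_Icc (hh y) hα.le)
        x).comp s ((hasDerivAt_id s).const_sub lam)
    exact (hasDerivAt_klTerm_left (hα.trans_le (hu s hs x).1) hμ0.ne').comp s hus
  · rw [abs_mul, abs_mul, abs_neg, abs_one, mul_one]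
    exact mul_le_mul (abs_log_div_le (hu s hs x) hμ hα)
      (abs_sub_le_of_le_of_le (hu s hs _).1 (hu s hs _).2 (hu s hs _).1 (hu s hs _).2)
      (abs_nonneg _) ((abs_nonneg _).trans (abs_log_div_le (hu s hs x) hμ hα))
  · exact tsum_congr fun x => by
      rw [← klTerm_sub_klTerm _ (hα.trans_le (hu t ht x).1) hμ0]; ring

lemma tsum_po_mul_klTerm_birthSemigroup_le (hα : 0 < α) (hh : ∀ x, h x ∈ Icc α β) {t : ℝ}
    (ht : t ∈ Icc 0 lam) :
    ∑' x, po t x * klTerm (birthSemigroup (lam - t) h (x + 1)) (birthSemigroup (lam - t) h x) ≤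
      ∑' x, po lam x * klTerm (h (x + 1)) (h x) := by
  set B := β * log (β / α) + (β - α)
  set k : ℕ → ℝ := fun y => klTerm (h (y + 1)) (h y)
  have hk : ∀ y, k y ∈ Icc 0 B := fun y =>
    ⟨klTerm_nonneg (hα.trans_le (hh _).1).le (hα.trans_le (hh _).1),
      (le_abs_self _).trans (abs_klTerm_le (hh _) (hh _) hα)⟩
  have hs : 0 ≤ lam - t := sub_nonneg.2 ht.2
  calc ∑' x, po t x * klTerm (birthSemigroup (lam - t) h (x + 1)) (birthSemigroup (lam - t) h x)
      ≤ ∑' x, po t x * birthSemigroup (lam - t) k x :=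
        Summable.tsum_le_tsum
          (fun x => mul_le_mul_of_nonneg_left (klTerm_birthSemigroup_le hs hα hh x)
            (po_nonneg ht.1 x))
          (summable_po_mul ht.1 fun x => abs_klTerm_le (birthSemigroup_mem_Icc hs hh _)
            (birthSemigroup_mem_Icc hs hh x) hα)
          (summable_po_mul ht.1 fun x =>
            abs_le_of_mem_Icc (birthSemigroup_mem_Icc hs hk x) le_rfl)
    _ = birthSemigroup (t + (lam - t)) k 0 := by
        rw [← birthSemigroup_birthSemigroup ht.1 hs fun y => abs_le_of_mem_Icc (hk y) le_rfl]
        simp only [birthSemigroup, zero_add]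
    _ = ∑' x, po lam x * k x := by simp [birthSemigroup]

end entropyInterpolation

theorem poisson_mlsi_of_mem_Icc {lam α β : ℝ} (hlam : 0 < lam) (hα : 0 < α) {h : ℕ → ℝ}
    (hh : ∀ x, h x ∈ Icc α β) :
    ∑' x, po lam x * klTerm (h x) (∑' y, po lam y * h y) ≤
      lam * ∑' x, po lam x * klTerm (h (x + 1)) (h x) := by
  set μ := ∑' y, po lam y * h y
  have hμ : μ ∈ Icc α β := tsum_po_mul_mem_Icc hlam.le hh
  obtain ⟨t, ht, hslope⟩ := exists_hasDerivAt_eq_slope _ _ hlam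
    (continuousOn_entropyInterpolation hα hh hμ)
    fun t ht => hasDerivAt_entropyInterpolation hα hh hμ ht
  rw [entropyInterpolation_self, entropyInterpolation_zero, klTerm_self, sub_zero, sub_zero,
    eq_div_iff hlam.ne'] at hslope
  rw [← hslope, mul_comm]
  exact mul_le_mul_of_nonneg_left
    (tsum_po_mul_klTerm_birthSemigroup_le hα hh (Ioo_subset_Icc_self ht)) hlam.le

lemma summable_and_tsum_le_of_tendsto {ι : Type*} {l : Filter ι} [l.NeBot] {a : ℕ → ℝ}
    {A : ι → ℕ → ℝ} {C : ℝ} (ha : ∀ x, 0 ≤ a x) (hA : ∀ N x, 0 ≤ A N x)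
    (hAs : ∀ N, Summable (A N)) (hlim : ∀ x, Tendsto (fun N => A N x) l (𝓝 (a x)))
    (hC : ∀ N, ∑' x, A N x ≤ C) : Summable a ∧ ∑' x, a x ≤ C := by
  have hpartial : ∀ n, ∑ x ∈ Finset.range n, a x ≤ C := fun n =>
    le_of_tendsto' (tendsto_finsetSum _ fun x _ => hlim x) fun N =>
      ((hAs N).sum_le_tsum _ fun x _ => hA N x).trans (hC N)
  exact ⟨summable_of_sum_range_le ha hpartial, Real.tsum_le_of_sum_range_le ha hpartial⟩

lemma tendsto_min_add_one_div (a : ℝ) :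
    Tendsto (fun N : ℕ => min a ((N : ℝ) + 1) + 1 / ((N : ℝ) + 1)) atTop (𝓝 a) := by
  have hmin : ∀ᶠ N : ℕ in atTop, a = min a ((N : ℝ) + 1) := by
    filter_upwards [(tendsto_natCast_atTop_atTop (R := ℝ)).eventually_ge_atTop a] with N hN
    exact (min_eq_left (by linarith)).symm
  simpa only [add_zero] using
    (tendsto_const_nhds.congr' hmin).add tendsto_one_div_add_atTop_nhds_zero_nat

theorem poisson_mlsi {lam : ℝ} (hlam : 0 < lam) {g : ℕ → ℝ} (hg : ∀ x, 0 ≤ g x)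
    (hg_succ : ∀ x, g x = 0 → g (x + 1) = 0) (hg1 : HasSum (fun x => po lam x * g x) 1)
    (hK : Summable fun x => po lam x * klTerm (g (x + 1)) (g x)) :
    Summable (fun x => po lam x * klTerm (g x) 1) ∧
      ∑' x, po lam x * klTerm (g x) 1 ≤ lam * ∑' x, po lam x * klTerm (g (x + 1)) (g x) := by
  set ε : ℕ → ℝ := fun N => 1 / ((N : ℝ) + 1)
  set h : ℕ → ℕ → ℝ := fun N x => min (g x) ((N : ℝ) + 1) + ε N
  set m : ℕ → ℝ := fun N => ∑' x, po lam x * h N x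
  have hε : ∀ N, 0 < ε N := fun N => by positivity
  have hh : ∀ N x, h N x ∈ Icc (ε N) ((N : ℝ) + 1 + ε N) := fun N x =>
    ⟨le_add_of_nonneg_left (le_min (hg x) (by positivity)), add_le_add_left (min_le_right _ _) _⟩
  have hm : ∀ N, m N ∈ Icc (ε N) ((N : ℝ) + 1 + ε N) := fun N => tsum_po_mul_mem_Icc hlam.le (hh N)
  have hπ : ∀ x, 0 ≤ po lam x := po_nonneg hlam.le
  have hm_lim : Tendsto m atTop (𝓝 1) := by
    rw [← hg1.tsum_eq]
    refine tendsto_tsum_of_dominated_convergence (bound := fun x => po lam x * (g x + 1)) ?_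
      (fun x => (tendsto_min_add_one_div (g x)).const_mul _) (Eventually.of_forall fun N x => ?_)
    · simpa [mul_add] using hg1.summable.add (hasSum_po lam).summable
    · rw [norm_mul, Real.norm_of_nonneg (hπ x), Real.norm_of_nonneg ((hε N).le.trans (hh N x).1)]
      refine mul_le_mul_of_nonneg_left (add_le_add (min_le_left _ _) ?_) (hπ x)
      exact div_le_one_of_le₀ (by simp) (by positivity)
  refine summable_and_tsum_le_of_tendsto (A := fun N x => po lam x * klTerm (h N x) (m N))
    (fun x => mul_nonneg (hπ x) (klTerm_nonneg (hg x) one_pos))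
    (fun N x => mul_nonneg (hπ x)
      (klTerm_nonneg ((hε N).trans_le (hh N x).1).le ((hε N).trans_le (hm N).1)))
    (fun N => summable_po_mul hlam.le fun x => abs_klTerm_le (hh N x) (hm N) (hε N))
    (fun x => ((tendsto_min_add_one_div (g x)).klTerm hm_lim one_ne_zero).const_mul _)
    fun N => (poisson_mlsi_of_mem_Icc hlam (hε N) (hh N)).trans
      (mul_le_mul_of_nonneg_left ?_ hlam.le)
  have hle : ∀ x, po lam x * klTerm (h N (x + 1)) (h N x) ≤
      po lam x * klTerm (g (x + 1)) (g x) := fun x =>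
    mul_le_mul_of_nonneg_left
      (klTerm_min_add_le (hg _) (hg _) (hg_succ x) (by positivity) (hε N)) (hπ x)
  exact Summable.tsum_le_tsum hle (Summable.of_nonneg_of_le (fun x => mul_nonneg (hπ x)
    (klTerm_nonneg ((hε N).le.trans (hh N _).1) ((hε N).trans_le (hh N x).1))) hle hK) hK

lemma hasSum_klTerm_iff {a b : ℕ → ℝ} {s : ℝ} (ha : HasSum a 1) (hb : HasSum b 1) :
    HasSum (fun x => klTerm (a x) (b x)) s ↔ HasSum (fun x => a x * log (a x / b x)) s := by
  have hba : HasSum (fun x => b x - a x) 0 := by simpa using hb.sub ha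
  constructor <;> intro h
  · simpa using (h.sub hba).congr_fun fun x => by unfold klTerm; ring
  · simpa using (h.add hba).congr_fun fun x => by unfold klTerm; ring

lemma hasSum_sizeBias {f : ℕ → ℝ} {lam : ℝ} (hmean : HasSum (fun i : ℕ => (i : ℝ) * f i) lam)
    (hlam : lam ≠ 0) : HasSum (sizeBias f) 1 := by
  have h := ((hasSum_nat_add_iff' 1).2 hmean).div_const lam
  simp only [Finset.sum_range_one, Nat.cast_zero, zero_mul, sub_zero, Nat.cast_add,
    Nat.cast_one, div_self hlam] at h
  refine h.congr_fun fun i => ?_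
  rw [sizeBias, show pmfMean f = lam from hmean.tsum_eq]

theorem exists_hasSum_klTerm_po_le {f : ℕ → ℝ} {lam : ℝ} (hlam : 0 < lam) (hf : IsPmf f)
    (hmean : pmfMean f = lam) (hsucc : ∀ i, f i = 0 → f (i + 1) = 0) {A : ℝ}
    (hA : HasSum (fun i => klTerm (sizeBias f i) (f i)) A) :
    ∃ B, HasSum (fun i => klTerm (f i) (po lam i)) B ∧ B ≤ lam * A := by
  have hπ := po_pos hlam
  set g : ℕ → ℝ := fun x => f x / po lam x
  have hfg : ∀ x, po lam x * g x = f x := fun x => mul_div_cancel₀ _ (hπ x).ne'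
  have hSg : ∀ x, po lam x * g (x + 1) = sizeBias f x := fun x => by
    have hrec := succ_mul_po_succ lam x
    have hne := (hπ (x + 1)).ne'
    simp only [g, sizeBias, hmean]
    field_simp
    linear_combination (-f (x + 1)) * hrec
  have hbridge : ∀ x, po lam x * klTerm (g (x + 1)) (g x) = klTerm (sizeBias f x) (f x) :=
    fun x => by rw [mul_klTerm (hπ x), hSg, hfg]
  have hg_succ : ∀ x, g x = 0 → g (x + 1) = 0 := fun x hx => by
    simp only [g, div_eq_zero_iff, (hπ _).ne', or_false] at hx ⊢
    exact hsucc x hx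
  obtain ⟨hsum, hle⟩ := poisson_mlsi hlam (fun x => div_nonneg (hf.1 x) (hπ x).le) hg_succ
    (hf.2.congr_fun hfg) (hA.summable.congr fun x => (hbridge x).symm)
  refine ⟨_, hsum.hasSum.congr_fun fun x => ?_, hle.trans_eq ?_⟩
  · rw [mul_klTerm (hπ x), hfg, mul_one]
  · rw [tsum_congr hbridge, hA.tsum_eq]

/-- Modified logarithmic Sobolev inequality: for a pmf `f` on `ℕ` with mean `λ ∈ (0,∞)`,
`D(f) ≤ λ · D(S(f) | f)`. -/
theorem relEntropy_le_mul_relEntropy_sizeBias (f : ℕ → ℝ) (lam : ℝ) (hf : IsPmf f)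
    (hmean : Summable (fun i : ℕ => (i : ℝ) * f i)) (hlam : pmfMean f = lam)
    (hpos : 0 < lam) :
    KLpo f ≤ ENNReal.ofReal lam * KL (sizeBias f) f := by
  by_cases hS : (∀ i, f i = 0 → sizeBias f i = 0) ∧
      Summable fun i => sizeBias f i * log (sizeBias f i / f i)
  swap
  · rw [KL, if_neg hS, ENNReal.mul_top (by simpa using hpos)]
    exact le_top
  obtain ⟨hsupp, A, hA⟩ := hS
  have hmean' : HasSum (fun i : ℕ => (i : ℝ) * f i) lam := by rw [← hlam]; exact hmean.hasSum
  have hsucc : ∀ i, f i = 0 → f (i + 1) = 0 := fun i hi => by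
    simpa [sizeBias, hlam, hpos.ne', Nat.cast_add_one_ne_zero] using hsupp i hi
  obtain ⟨B, hB, hBA⟩ := exists_hasSum_klTerm_po_le hpos hf hlam hsucc
    ((hasSum_klTerm_iff (hasSum_sizeBias hmean' hpos.ne') hf.2).2 hA)
  have hB' := (hasSum_klTerm_iff hf.2 (hasSum_po lam)).1 hB
  rw [KLpo, hlam, KL, KL, if_pos ⟨fun i hi => absurd hi (po_pos hpos i).ne', hB'.summable⟩,
    if_pos ⟨hsupp, hA.summable⟩, hB'.tsum_eq, hA.tsum_eq, ← ENNReal.ofReal_mul hpos.le]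
  exact ENNReal.ofReal_le_ofReal hBA
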